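/- arXiv:2205.07280 — 2 statements merged into one kernel-verified Lean document; each statement's English description precedes it below -/
import Mathlib

section
/- For 0 < c < 1, the contour integral (1/(4i)) ∮_{|z|=1} log|1 − √c z|² · (2cz − √c(z² + 1)) / ((z − √c)(1 − √c z) z) dz equals −π log(1 − c). -/
/-!
Write `a = √c`. On the unit circle `z⁻¹ = conj z`, so
`log |1 - a z|² = log (1 - a z) + log (1 - a z⁻¹)` with the principal logarithm. The rational factor
`kernel a` of the integrand satisfies `kernel a z⁻¹ = z² kernel a z`, so the substitution `z ↦ z⁻¹`
turns the integral of the second term into that of the first. Finally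
`kernel a z = z⁻¹ - (z - a)⁻¹ - a (1 - a z)⁻¹`, and Cauchy's formula for `log (1 - a z)`,
holomorphic on the closed disc, gives `∮ log (1 - a z) kernel a z dz = 2πi (log 1 - log (1 - a²))`.
-/

open Complex Metric Set
open scoped Real ComplexConjugate

theorem circleIntegral_comp_inv_div_sq {E : Type*} [NormedAddCommGroup E] [NormedSpace ℂ E]
    (f : ℂ → E) :
    (∮ z in C(0, 1), (z ^ 2)⁻¹ • f z⁻¹) = ∮ z in C(0, 1), f z := by
  set h : ℝ → E := fun θ => (circleMap 0 1 θ * I) • f (circleMap 0 1 θ)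
  have hper : Function.Periodic h (2 * π) :=
    (periodic_circleMap 0 1).comp fun w => (w * I) • f w
  have hrefl (θ : ℝ) : (circleMap 0 1 θ * I) •
      ((circleMap 0 1 θ ^ 2)⁻¹ • f (circleMap 0 1 θ)⁻¹) = h (-θ) := by
    have hne : circleMap 0 1 θ ≠ 0 := circleMap_ne_center one_ne_zero
    have hinv : (circleMap 0 1 θ)⁻¹ = circleMap 0 1 (-θ) := by simp [circleMap_zero_inv]
    simp only [h, smul_smul, ← hinv]
    congr 1
    field_simp
  simp only [circleIntegral, deriv_circleMap, hrefl]
  rw [intervalIntegral.integral_comp_neg h, neg_zero]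
  simpa using hper.intervalIntegral_add_eq (-(2 * π)) 0

noncomputable def kernel (a z : ℂ) : ℂ :=
  (2 * a ^ 2 * z - a * (z ^ 2 + 1)) / ((z - a) * (1 - a * z) * z)

theorem kernel_inv (a z : ℂ) : kernel a z⁻¹ = z ^ 2 * kernel a z := by
  rcases eq_or_ne z 0 with rfl | hz
  · simp [kernel]
  have h1 : z⁻¹ - a = (1 - a * z) * z⁻¹ := by field_simp
  have h2 : 1 - a * z⁻¹ = (z - a) * z⁻¹ := by field_simp
  simp only [kernel, h1, h2, div_eq_mul_inv, mul_inv]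
  field_simp
  ring

theorem kernel_eq_sub {a z : ℂ} (hz : z ≠ 0) (hza : z ≠ a) (haz : 1 - a * z ≠ 0) :
    kernel a z = z⁻¹ - (z - a)⁻¹ - a * (1 - a * z)⁻¹ := by
  have := sub_ne_zero.2 hza
  rw [kernel]
  field_simp
  ring

theorem norm_mul_lt_one {a z : ℂ} (ha : ‖a‖ < 1) (hz : ‖z‖ ≤ 1) : ‖a * z‖ < 1 := by
  rw [norm_mul]
  nlinarith [norm_nonneg a, norm_nonneg z]

theorem one_sub_mul_mem_slitPlane {a z : ℂ} (h : ‖a * z‖ < 1) : 1 - a * z ∈ slitPlane := by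
  simpa [sub_eq_add_neg] using mem_slitPlane_of_norm_lt_one (z := -(a * z)) (by rwa [norm_neg])

theorem one_sub_mul_ne_zero {a z : ℂ} (ha : ‖a‖ < 1) (hz : ‖z‖ ≤ 1) : 1 - a * z ≠ 0 :=
  slitPlane_ne_zero (one_sub_mul_mem_slitPlane (norm_mul_lt_one ha hz))

theorem differentiableOn_log_one_sub_mul {a : ℂ} (ha : ‖a‖ < 1) :
    DifferentiableOn ℂ (fun z => log (1 - a * z)) (closedBall 0 1) := fun z hz =>
  (DifferentiableAt.clog (f := fun z => 1 - a * z) (by fun_prop) (one_sub_mul_mem_slitPlane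
    (norm_mul_lt_one ha (mem_closedBall_zero_iff.1 hz)))).differentiableWithinAt

theorem continuousOn_kernel {a : ℂ} (ha : ‖a‖ < 1) : ContinuousOn (kernel a) (sphere 0 1) := by
  intro z hz
  have hz1 : ‖z‖ = 1 := by simpa using hz
  have hz0 : z ≠ 0 := by rintro rfl; simp at hz1
  have hza : z - a ≠ 0 := by
    rw [sub_ne_zero]; rintro rfl; linarith
  have haz : 1 - a * z ≠ 0 := one_sub_mul_ne_zero ha hz1.le
  unfold kernel
  fun_prop (disch := simp [*])

theorem ContinuousOn.circleIntegrable_sub_inv_smul {E : Type*} [NormedAddCommGroup E]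
    [NormedSpace ℂ E] {f : ℂ → E} {c w : ℂ} {R : ℝ} (hR : 0 ≤ R)
    (hf : ContinuousOn f (sphere c R)) (hw : w ∉ sphere c R) :
    CircleIntegrable (fun z => (z - w)⁻¹ • f z) c R := by
  refine ContinuousOn.circleIntegrable hR (ContinuousOn.smul ?_ hf)
  exact (continuousOn_id.sub continuousOn_const).inv₀ fun _ hz =>
    sub_ne_zero.2 (ne_of_mem_of_not_mem hz hw)

theorem circleIntegral_log_one_sub_mul_mul_kernel {a : ℂ} (ha : ‖a‖ < 1) :
    (∮ z in C(0, 1), log (1 - a * z) * kernel a z) = -(2 * π * I) * log (1 - a ^ 2) := by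
  set F := fun z => log (1 - a * z)
  have hF := differentiableOn_log_one_sub_mul ha
  have hFc : ContinuousOn F (sphere 0 1) := hF.continuousOn.mono sphere_subset_closedBall
  have haz {z : ℂ} (hz : z ∈ closedBall (0 : ℂ) 1) : 1 - a * z ≠ 0 :=
    one_sub_mul_ne_zero ha (mem_closedBall_zero_iff.1 hz)
  have hG : DifferentiableOn ℂ (fun z => a * (1 - a * z)⁻¹ * F z) (closedBall 0 1) :=
    fun z hz => ((by fun_prop : DifferentiableAt ℂ (fun z => 1 - a * z) z).inv (haz hz)
      |>.const_mul a |>.differentiableWithinAt).mul (hF z hz)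
  have ha_ball : a ∈ ball (0 : ℂ) 1 := mem_ball_zero_iff.2 ha
  have hsplit : EqOn (fun z => F z * kernel a z)
      (fun z => (z - 0)⁻¹ • F z - (z - a)⁻¹ • F z - a * (1 - a * z)⁻¹ * F z) (sphere 0 1) := by
    intro z hz
    show F z * kernel a z = _
    rw [kernel_eq_sub (ne_of_mem_sphere hz one_ne_zero)
      (sphere_disjoint_ball.ne_of_mem hz ha_ball) (haz (sphere_subset_closedBall hz))]
    simp only [smul_eq_mul, sub_zero]
    ring
  have hint_zero := hFc.circleIntegrable_sub_inv_smul zero_le_one (w := 0) (by simp)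
  have hint_a := hFc.circleIntegrable_sub_inv_smul zero_le_one
    (sphere_disjoint_ball.symm.notMem_of_mem_left ha_ball)
  rw [circleIntegral.integral_congr zero_le_one hsplit,
    circleIntegral.integral_sub (f := fun z => (z - 0)⁻¹ • F z - (z - a)⁻¹ • F z)
      (hint_zero.sub hint_a)
      ((hG.continuousOn.mono sphere_subset_closedBall).circleIntegrable zero_le_one),
    circleIntegral.integral_sub hint_zero hint_a,
    hF.circleIntegral_sub_inv_smul (mem_ball_self one_pos),
    hF.circleIntegral_sub_inv_smul ha_ball,
    (hG.mono closure_ball_subset_closedBall).diffContOnCl.circleIntegral_eq_zero zero_le_one]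
  simp only [smul_eq_mul, mul_zero, sub_zero, log_one, sq]
  ring

theorem circleIntegral_comp_inv_mul_kernel (a : ℂ) (g : ℂ → ℂ) :
    (∮ z in C(0, 1), g z⁻¹ * kernel a z) = ∮ z in C(0, 1), g z * kernel a z := by
  rw [← circleIntegral_comp_inv_div_sq fun z => g z * kernel a z]
  congr 1
  funext z
  rcases eq_or_ne z 0 with rfl | hz
  · simp [kernel]
  rw [kernel_inv, smul_eq_mul]
  field_simp

theorem ofReal_log_norm_one_sub_mul_sq {a : ℝ} {z : ℂ} (ha : |a| < 1) (hz : ‖z‖ = 1) :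
    (Real.log (‖1 - a * z‖ ^ 2) : ℂ) = log (1 - a * z) + log (1 - a * z⁻¹) := by
  have hconj : 1 - a * z⁻¹ = conj (1 - a * z) := by
    rw [inv_eq_conj hz, map_sub, map_one, map_mul, conj_ofReal]
  have hslit := one_sub_mul_mem_slitPlane (a := a) (z := z) (by simpa [hz] using ha)
  rw [hconj, log_conj _ (slitPlane_arg_ne_pi hslit), add_conj, log_re, Real.log_pow]
  push_cast
  ring

theorem circleIntegral_log_norm_one_sub_mul_sq_mul_kernel {a : ℝ} (ha : |a| < 1) :
    (∮ z in C(0, 1), (Real.log (‖1 - a * z‖ ^ 2) : ℂ) * kernel a z)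
      = -(4 * π * I) * Real.log (1 - a ^ 2) := by
  have ha' : ‖(a : ℂ)‖ < 1 := by simpa using ha
  have hF := (differentiableOn_log_one_sub_mul ha').continuousOn
  have hFK : CircleIntegrable (fun z => log (1 - a * z) * kernel a z) 0 1 :=
    ((hF.mono sphere_subset_closedBall).mul (continuousOn_kernel ha')).circleIntegrable zero_le_one
  have hinv : MapsTo (·⁻¹) (sphere (0 : ℂ) 1) (closedBall 0 1) := fun z hz => by
    simp_all [norm_inv]
  have hFK_inv : CircleIntegrable (fun z => log (1 - a * z⁻¹) * kernel a z) 0 1 :=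
    ((hF.comp (continuousOn_inv₀.mono fun _ hz => ne_of_mem_sphere hz one_ne_zero) hinv).mul
      (continuousOn_kernel ha')).circleIntegrable zero_le_one
  have hsplit : EqOn (fun z : ℂ => (Real.log (‖1 - a * z‖ ^ 2) : ℂ) * kernel a z)
      (fun z => log (1 - a * z) * kernel a z + log (1 - a * z⁻¹) * kernel a z) (sphere 0 1) :=
    fun z hz => by
      simp only [ofReal_log_norm_one_sub_mul_sq ha (mem_sphere_zero_iff_norm.1 hz), add_mul]
  rw [circleIntegral.integral_congr zero_le_one hsplit,
    circleIntegral.integral_add hFK hFK_inv,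
    circleIntegral_comp_inv_mul_kernel a fun z => log (1 - a * z),
    circleIntegral_log_one_sub_mul_mul_kernel ha', ofReal_log (by nlinarith [abs_lt.1 ha])]
  push_cast
  ring

/-- For `0 < c < 1`,
`(1/(4i)) ∮_{|z|=1} log|1 − √c z|² · (2cz − √c(z²+1)) / ((z − √c)(1 − √c z) z) dz
  = −π log(1 − c)`. -/
theorem stmt_4 (c : ℝ) (hc0 : 0 < c) (hc1 : c < 1) :
    (1 / (4 * Complex.I)) *
      (∮ z in C((0 : ℂ), 1),
        (Real.log (‖1 - (Real.sqrt c : ℂ) * z‖ ^ 2) : ℂ) *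
          (2 * (c : ℂ) * z - (Real.sqrt c : ℂ) * (z ^ 2 + 1)) /
          ((z - (Real.sqrt c : ℂ)) * (1 - (Real.sqrt c : ℂ) * z) * z))
      = -(Real.pi : ℂ) * (Real.log (1 - c) : ℂ) := by
  have hsqrt : |Real.sqrt c| < 1 := by
    rw [abs_of_nonneg (Real.sqrt_nonneg c), Real.sqrt_lt' one_pos]
    linarith
  have hc : (c : ℂ) = (Real.sqrt c : ℂ) ^ 2 := by rw [← ofReal_pow, Real.sq_sqrt hc0.le]
  simp_rw [hc, mul_div_assoc, ← kernel.eq_1]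
  rw [circleIntegral_log_norm_one_sub_mul_sq_mul_kernel hsqrt, Real.sq_sqrt hc0.le]
  field_simp
end

section
/- For c ∈ (0,1), ∫₀^{2π} log(1 + c − 2√c cos θ)/(1 + c − 2√c cos θ) · (c − √c cos θ) dθ = −2π log(1 − c). -/
/-!
Write `z = √c e^{iθ}`, so that `1 + c - 2√c cos θ = |1 - z|²` and, with `w = z / (1 - z)`, the
integrand equals `-2 Re log(1 - z) · Re w = -Re (log(1 - z) (w + w̄))`. On the circle `|z|² = c`
one has `w̄ = z / (z - c) - 1`, so the integrand is minus the real part of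
`log(1 - z) (w - 1) + z / (z - c) · log(1 - z)`, with both `log(1 - z)` and `log(1 - z) (w - 1)`
holomorphic on the unit disc. The mean value property and Cauchy's formula give the averages
`log 1 · (-1) = 0` and `log(1 - c)` of the two terms.
-/

open Complex ComplexConjugate Metric

namespace Complex

lemma log_normSq_eq_two_mul_log_re (z : ℂ) : Real.log (normSq z) = 2 * (log z).re := by
  rw [log_re, normSq_eq_norm_sq, Real.log_pow]
  push_cast
  ring

lemma re_div_one_sub (z : ℂ) : (z / (1 - z)).re = (z.re - normSq z) / normSq (1 - z) := by
  rw [div_re, normSq_apply z, sub_re, sub_im, one_re, one_im]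
  ring

lemma conj_div_one_sub_of_normSq_eq {z : ℂ} {a : ℝ} (hz : normSq z = a) (hza : z ≠ a) :
    conj (z / (1 - z)) = z / (z - a) - 1 := by
  have hmul : z * conj z = a := by rw [mul_conj, hz]
  have hsub : z - a ≠ 0 := sub_ne_zero.mpr hza
  have hconj : 1 - conj z ≠ 0 := by
    intro h
    apply hza
    rw [← hmul, ← sub_eq_zero.mp h, mul_one]
  rw [map_div₀, map_sub, map_one]
  field_simp
  linear_combination hmul

lemma log_normSq_one_sub_div_mul_eq {z : ℂ} {a : ℝ} (hz : normSq z = a) (hza : z ≠ a) :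
    Real.log (normSq (1 - z)) / normSq (1 - z) * (normSq z - z.re) =
      -(log (1 - z) * (z / (1 - z) - 1) + z / (z - a) * log (1 - z)).re := by
  have hsum : z / (1 - z) - 1 + z / (z - a) = (2 * (z / (1 - z)).re : ℝ) := by
    rw [← add_conj, conj_div_one_sub_of_normSq_eq hz hza]
    ring
  have hre : (log (1 - z) * (z / (1 - z) - 1) + z / (z - a) * log (1 - z)).re =
      2 * (log (1 - z)).re * (z / (1 - z)).re := by
    rw [mul_comm (z / (z - a)), ← mul_add, hsum, re_mul_ofReal]
    ring
  rw [hre, log_normSq_eq_two_mul_log_re, re_div_one_sub]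
  ring

lemma normSq_circleMap_zero (r θ : ℝ) : normSq (circleMap 0 r θ) = r ^ 2 := by
  rw [normSq_apply, circleMap_zero_re, circleMap_zero_im]
  linear_combination r ^ 2 * Real.cos_sq_add_sin_sq θ

lemma normSq_one_sub_circleMap_zero (r θ : ℝ) :
    normSq (1 - circleMap 0 r θ) = 1 + r ^ 2 - 2 * r * Real.cos θ := by
  rw [normSq_apply, sub_re, sub_im, one_re, one_im, circleMap_zero_re, circleMap_zero_im]
  linear_combination r ^ 2 * Real.cos_sq_add_sin_sq θ

lemma differentiableOn_log_one_sub : DifferentiableOn ℂ (fun z => log (1 - z)) (ball 0 1) := by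
  intro z hz
  have hslit : 1 - z ∈ slitPlane := by
    simpa [sub_eq_add_neg] using mem_slitPlane_of_norm_lt_one (z := -z) (by simpa using hz)
  exact ((differentiableAt_const 1).sub differentiableAt_id |>.clog hslit).differentiableWithinAt

lemma differentiableOn_log_one_sub_mul_div_one_sub_sub_one :
    DifferentiableOn ℂ (fun z => log (1 - z) * (z / (1 - z) - 1)) (ball 0 1) := by
  refine differentiableOn_log_one_sub.mul (DifferentiableOn.sub_const ?_ _)
  refine differentiableOn_id.div (by fun_prop) fun z hz => sub_ne_zero.mpr ?_
  rintro rfl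
  simp at hz

end Complex

lemma ContinuousOn.circleIntegrable_of_closedBall_subset {E : Type*} [NormedAddCommGroup E]
    {f : ℂ → E} {U : Set ℂ} {c : ℂ} {R : ℝ} (hf : ContinuousOn f U)
    (hU : closedBall c |R| ⊆ U) : CircleIntegrable f c R :=
  (hf.mono (sphere_subset_closedBall.trans hU)).circleIntegrable'

lemma circleIntegrable_div_sub_mul_log_one_sub {R : ℝ} (hR : |R| < 1) {w : ℂ}
    (hw : w ∈ ball 0 |R|) : CircleIntegrable (fun z => z / (z - w) * log (1 - z)) 0 R := by
  refine ContinuousOn.circleIntegrable' (ContinuousOn.mul ?_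
    (differentiableOn_log_one_sub.continuousOn.mono
      (sphere_subset_closedBall.trans (closedBall_subset_ball hR))))
  exact continuousOn_id.div (by fun_prop) fun z hz =>
    sub_ne_zero.mpr (sphere_disjoint_ball.ne_of_mem hz hw)

lemma circleAverage_log_one_sub_mul_add_div_sub_mul {R : ℝ} (hR : |R| < 1) {w : ℂ}
    (hw : w ∈ ball 0 |R|) :
    Real.circleAverage (fun z => log (1 - z) * (z / (1 - z) - 1) + z / (z - w) * log (1 - z))
      0 R = log (1 - w) := by
  have hball : closedBall (0 : ℂ) |R| ⊆ ball 0 1 := closedBall_subset_ball hR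
  have hdiff := differentiableOn_log_one_sub_mul_div_one_sub_sub_one
  have hcauchy := (differentiableOn_log_one_sub.diffContOnCl_ball hball).circleAverage_smul_div hw
  simp only [sub_zero, smul_eq_mul] at hcauchy
  rw [Real.circleAverage_fun_add (hdiff.continuousOn.circleIntegrable_of_closedBall_subset hball)
    (circleIntegrable_div_sub_mul_log_one_sub hR hw), (hdiff.diffContOnCl_ball hball).circleAverage,
    hcauchy]
  simp

theorem circleAverage_log_normSq_one_sub_div_mul {R : ℝ} (hR0 : 0 < R) (hR1 : R < 1) :
    Real.circleAverage (fun z => Real.log (normSq (1 - z)) / normSq (1 - z) * (normSq z - z.re))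
      0 R = -Real.log (1 - R ^ 2) := by
  have hR : |R| < 1 := by rwa [abs_of_pos hR0]
  have hw : ((R ^ 2 : ℝ) : ℂ) ∈ ball 0 |R| := by
    rw [mem_ball_zero_iff, norm_real, Real.norm_of_nonneg (by positivity), abs_of_pos hR0]
    nlinarith
  have hintegrable : CircleIntegrable (fun z =>
      log (1 - z) * (z / (1 - z) - 1) + z / (z - (R ^ 2 : ℝ)) * log (1 - z)) 0 R :=
    ((differentiableOn_log_one_sub_mul_div_one_sub_sub_one.continuousOn
      ).circleIntegrable_of_closedBall_subset (closedBall_subset_ball hR)).add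
      (circleIntegrable_div_sub_mul_log_one_sub hR hw)
  calc _ = Real.circleAverage ((-reCLM) ∘ fun z =>
        log (1 - z) * (z / (1 - z) - 1) + z / (z - (R ^ 2 : ℝ)) * log (1 - z)) 0 R := by
        refine Real.circleAverage_congr_sphere fun z hz => ?_
        have hnormSq : normSq z = R ^ 2 := by
          rw [normSq_eq_norm_sq, mem_sphere_zero_iff_norm.mp hz, sq_abs]
        exact log_normSq_one_sub_div_mul_eq hnormSq (sphere_disjoint_ball.ne_of_mem hz hw)
    _ = -(log (1 - (R ^ 2 : ℝ))).re := by
      rw [ContinuousLinearMap.circleAverage_comp_comm _ hintegrable,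
        circleAverage_log_one_sub_mul_add_div_sub_mul hR hw]
      rfl
    _ = -Real.log (1 - R ^ 2) := by
      rw [← ofReal_one, ← ofReal_sub, log_ofReal_re]

/-- For `c ∈ (0,1)`,
`∫₀^{2π} log(1 + c − 2√c cos θ)/(1 + c − 2√c cos θ) · (c − √c cos θ) dθ = −2π log(1 − c)`. -/
theorem stmt_7 (c : ℝ) (hc0 : 0 < c) (hc1 : c < 1) :
    ∫ θ in (0 : ℝ)..(2 * Real.pi),
      Real.log (1 + c - 2 * Real.sqrt c * Real.cos θ) /
        (1 + c - 2 * Real.sqrt c * Real.cos θ) * (c - Real.sqrt c * Real.cos θ)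
      = -2 * Real.pi * Real.log (1 - c) := by
  have hsq : Real.sqrt c ^ 2 = c := Real.sq_sqrt hc0.le
  calc _ = ∫ θ in (0 : ℝ)..(2 * Real.pi), (fun z : ℂ =>
        Real.log (normSq (1 - z)) / normSq (1 - z) * (normSq z - z.re))
          (circleMap 0 (Real.sqrt c) θ) :=
        intervalIntegral.integral_congr fun θ _ => by
          simp only [normSq_one_sub_circleMap_zero, normSq_circleMap_zero, circleMap_zero_re, hsq]
    _ = 2 * Real.pi * Real.circleAverage (fun z : ℂ =>
        Real.log (normSq (1 - z)) / normSq (1 - z) * (normSq z - z.re)) 0 (Real.sqrt c) := by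
      rw [Real.circleAverage_def, smul_eq_mul, mul_inv_cancel_left₀ Real.two_pi_pos.ne']
    _ = _ := by
      rw [circleAverage_log_normSq_one_sub_div_mul (Real.sqrt_pos.mpr hc0)
        ((Real.sqrt_lt' one_pos).mpr (by linarith)), hsq]
      ring
end
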